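/- arXiv:2206.14795 — 2 statements merged into one kernel-verified Lean document; each statement's English description precedes it below -/
import Mathlib

section
/- Let A be a commutative ring and π ∈ A a non-zero-divisor. Let M ∈ D(A) be derived π-adically complete. If M ⊗^L_A A/π is concentrated in cohomological degrees ≤ −2, then M is concentrated in cohomological degrees ≤ −1. -/
open CategoryTheory CategoryTheory.Limits

/-- The map `∏_{n∈ℕ} M → ∏_{n∈ℕ} M`, `(xₙ)ₙ ↦ (xₙ − π·x_{n+1})ₙ`. -/
noncomputable def towerMap (A : Type) [CommRing A] (π : A)
    (M : CochainComplex (ModuleCat.{0} A) ℤ) :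
    (∏ᶜ fun _ : ℕ => M) ⟶ (∏ᶜ fun _ : ℕ => M) :=
  Pi.lift fun n => Pi.π (fun _ : ℕ => M) n - π • Pi.π (fun _ : ℕ => M) (n + 1)

/-- The derived limit `Rlim(⋯ →^π M →^π M)`, realized by the standard model for derived limits
of `ℕ`-indexed towers: the shifted mapping cone of `(xₙ)ₙ ↦ (xₙ − π·x_{n+1})ₙ`. -/
noncomputable def Rlim (A : Type) [CommRing A] (π : A)
    (M : CochainComplex (ModuleCat.{0} A) ℤ) : CochainComplex (ModuleCat.{0} A) ℤ :=
  (CochainComplex.mappingCone (towerMap A π M))⟦(-1 : ℤ)⟧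

/-- `M` is derived `π`-adically complete: `Rlim(⋯ →^π M →^π M) ≃ 0` in `D(A)`,
i.e. this complex is acyclic. -/
def IsDerivedPiComplete (A : Type) [CommRing A] (π : A)
    (M : CochainComplex (ModuleCat.{0} A) ℤ) : Prop :=
  ∀ i : ℤ, IsZero ((Rlim A π M).homology i)

/-- The mapping cone of multiplication by `π` on `M`, computing `M ⊗^L_A A/π`. -/
noncomputable def derivedModCone (A : Type) [CommRing A] (x : A)
    (M : CochainComplex (ModuleCat.{0} A) ℤ) : CochainComplex (ModuleCat.{0} A) ℤ :=
  CochainComplex.mappingCone (x • 𝟙 M)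

/-!
Since `H^i(M ⊗^L A/π) = 0` for `i ≥ -1`, the long exact sequence of the cone of `π` makes
multiplication by `π` surjective on `H^i(M)` for `i ≥ 0`. So a cycle `z` of degree `i ≥ 0` starts
a tower of cycles `z = z₀, z₁, …` with `zₙ ≡ π zₙ₊₁` modulo boundaries. The tower is a cycle of
`∏ M` which `(xₙ) ↦ (xₙ − π xₙ₊₁)` sends to a boundary; the cone of that map is acyclic by
completeness, so the tower is a boundary of `∏ M`, and its zeroth component exhibits `z` as a
boundary.
-/

universe u v

namespace HomologicalComplex

variable {R : Type u} [Ring R] {ι : Type*} {c : ComplexShape ι}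

lemma isZero_homology_iff_exists_d_eq (C : HomologicalComplex (ModuleCat.{v} R) c) {i j k : ι}
    (hij : c.Rel i j) (hjk : c.Rel j k) :
    IsZero (C.homology j) ↔ ∀ x : C.X j, C.d j k x = 0 → ∃ y : C.X i, C.d i j y = x := by
  rw [← exactAt_iff_isZero_homology, C.exactAt_iff' i j k (c.prev_eq' hij) (c.next_eq' hjk),
    ShortComplex.moduleCat_exact_iff]
  rfl

lemma Hom.comm_apply {K L : HomologicalComplex (ModuleCat.{v} R) c} (f : K ⟶ L) (i j : ι)
    (x : K.X i) : f.f j (K.d i j x) = L.d i j (f.f i x) := by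
  simpa only [ConcreteCategory.comp_apply] using (ConcreteCategory.congr_hom (f.comm i j) x).symm

section Pi

variable {β : Type v} (K : β → HomologicalComplex (ModuleCat.{v} R) c)

noncomputable def piXIso (j : ι) : (∏ᶜ K).X j ≅ ModuleCat.of R (∀ b, (K b).X j) :=
  PreservesProduct.iso (eval _ c j) K ≪≫ ModuleCat.piIsoPi fun b => (K b).X j

lemma piXIso_hom_apply (j : ι) (x : (∏ᶜ K).X j) (b : β) :
    (piXIso K j).hom x b = (Pi.π K b).f j x := by
  -- a term proof, since `rw` trips over `(eval _ c j).obj` versus `.X j` in the factors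
  have : (piXIso K j).hom ≫ ModuleCat.ofHom (LinearMap.proj b) = (Pi.π K b).f j :=
    (Category.assoc _ _ _).trans ((congrArg (_ ≫ ·)
      (ModuleCat.piIsoPi_hom_ker_subtype _ b)).trans (piComparison_comp_π _ K b))
  exact ConcreteCategory.congr_hom this x

lemma π_f_piXIso_inv_apply (j : ι) (g : ∀ b, (K b).X j) (b : β) :
    (Pi.π K b).f j ((piXIso K j).inv g) = g b := by
  refine (piXIso_hom_apply K j _ b).symm.trans ?_
  rw [Iso.inv_hom_id_apply]

lemma piX_ext {j : ι} {x y : (∏ᶜ K).X j} (h : ∀ b, (Pi.π K b).f j x = (Pi.π K b).f j y) :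
    x = y := by
  rw [← Iso.hom_inv_id_apply (piXIso K j) x, ← Iso.hom_inv_id_apply (piXIso K j) y]
  congr 1
  funext b
  rw [piXIso_hom_apply, piXIso_hom_apply]
  exact h b

end Pi

section Cofiber

open homotopyCofiber

variable {F G : HomologicalComplex (ModuleCat.{v} R) c} (φ : F ⟶ G) [DecidableRel c.Rel]

lemma exists_cycle_map_add_d_eq_of_isZero_homology_homotopyCofiber {i j k : ι}
    (hij : c.Rel i j) (hjk : c.Rel j k) (hφ : IsZero ((homotopyCofiber φ).homology j))
    (z : G.X j) (hz : G.d j k z = 0) :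
    ∃ (a : F.X j) (w : G.X i), F.d j k a = 0 ∧ φ.f j a + G.d i j w = z := by
  have hcycle : (homotopyCofiber φ).d j k (inrX φ j z) = 0 := by
    have h := ConcreteCategory.congr_hom (inrX_d φ j k) z
    rwa [ConcreteCategory.comp_apply, ConcreteCategory.comp_apply, hz, map_zero] at h
  obtain ⟨b, hb⟩ := ((homotopyCofiber φ).isZero_homology_iff_exists_d_eq hij hjk).1 hφ _ hcycle
  rw [homotopyCofiber_d] at hb
  have h1 := ConcreteCategory.congr_hom (d_fstX φ i j k hij hjk) b
  have h2 := ConcreteCategory.congr_hom (d_sndX φ i j hij) b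
  have h3 := ConcreteCategory.congr_hom (inrX_fstX φ j k hjk) z
  have h4 := ConcreteCategory.congr_hom (inrX_sndX φ j) z
  simp only [ConcreteCategory.comp_apply, ModuleCat.hom_neg, ModuleCat.hom_add,
    ModuleCat.hom_zero, LinearMap.neg_apply, LinearMap.add_apply, LinearMap.zero_apply,
    ModuleCat.id_apply] at h1 h2 h3 h4
  rw [hb, h3] at h1
  rw [hb, h4] at h2
  exact ⟨fstX φ i j hij b, sndX φ i b, neg_eq_zero.1 h1.symm, h2.symm⟩

lemma exists_d_eq_of_isZero_homology_homotopyCofiber {h i j k : ι}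
    (hhi : c.Rel h i) (hij : c.Rel i j) (hjk : c.Rel j k)
    (hφ : IsZero ((homotopyCofiber φ).homology i))
    (x : F.X j) (hx : F.d j k x = 0) (w : G.X i) (hxw : φ.f j x = G.d i j w) :
    ∃ y : F.X i, F.d i j y = x := by
  have hcycle : (homotopyCofiber φ).d i j (inlX φ j i hij x - inrX φ i w) = 0 := by
    have h1 := ConcreteCategory.congr_hom (inlX_d φ i j k hij hjk) x
    have h2 := ConcreteCategory.congr_hom (inrX_d φ i j) w
    simp only [ConcreteCategory.comp_apply, ModuleCat.hom_neg, ModuleCat.hom_add,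
      LinearMap.neg_apply, LinearMap.add_apply, hx, hxw, map_zero, neg_zero, zero_add] at h1 h2
    rw [map_sub, homotopyCofiber_d, h1, h2, sub_self]
  obtain ⟨b, hb⟩ := ((homotopyCofiber φ).isZero_homology_iff_exists_d_eq hhi hij).1 hφ _ hcycle
  rw [homotopyCofiber_d] at hb
  have h1 := ConcreteCategory.congr_hom (d_fstX φ h i j hhi hij) b
  have h2 := ConcreteCategory.congr_hom (inlX_fstX φ j i hij) x
  have h3 := ConcreteCategory.congr_hom (inrX_fstX φ i j hij) w
  simp only [ConcreteCategory.comp_apply, ModuleCat.hom_neg, ModuleCat.hom_zero,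
    LinearMap.neg_apply, LinearMap.zero_apply, ModuleCat.id_apply] at h1 h2 h3
  rw [hb, map_sub, h2, h3, sub_zero] at h1
  exact ⟨-fstX φ h i hhi b, by rw [map_neg, ← h1]⟩

end Cofiber

end HomologicalComplex

section Tower

open HomologicalComplex

variable {A : Type} [CommRing A] {π : A} {M : CochainComplex (ModuleCat.{0} A) ℤ}

lemma exists_tower_of_isZero_homology_derivedModCone {i : ℤ}
    (hM : IsZero ((derivedModCone A π M).homology i)) (z : M.X i) (hz : M.d i (i + 1) z = 0) :
    ∃ (zs : ℕ → M.X i) (ws : ℕ → M.X (i - 1)), zs 0 = z ∧ (∀ n, M.d i (i + 1) (zs n) = 0) ∧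
      ∀ n, π • zs (n + 1) + M.d (i - 1) i (ws n) = zs n := by
  have step : ∀ s : {x : M.X i // M.d i (i + 1) x = 0},
      ∃ (t : {x : M.X i // M.d i (i + 1) x = 0}) (w : M.X (i - 1)),
        π • (t : M.X i) + M.d (i - 1) i w = s := by
    rintro ⟨x, hx⟩
    obtain ⟨a, w, ha, haw⟩ := exists_cycle_map_add_d_eq_of_isZero_homology_homotopyCofiber
      (π • 𝟙 M) (i := i - 1) (by simp) rfl hM x hx
    exact ⟨⟨a, ha⟩, w, haw⟩
  choose next w hw using step
  let zs : ℕ → {x : M.X i // M.d i (i + 1) x = 0} := fun n => next^[n] ⟨z, hz⟩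
  refine ⟨fun n => zs n, fun n => w (zs n), rfl, fun n => (zs n).2, fun n => ?_⟩
  simp only [zs, Function.iterate_succ_apply']
  exact hw _

lemma towerMap_f_apply {i : ℤ} (x : (∏ᶜ fun _ : ℕ => M).X i) (n : ℕ) :
    (Pi.π (fun _ : ℕ => M) n).f i ((towerMap A π M).f i x) =
      (Pi.π (fun _ : ℕ => M) n).f i x - π • (Pi.π (fun _ : ℕ => M) (n + 1)).f i x := by
  have h : towerMap A π M ≫ Pi.π _ n =
      Pi.π (fun _ : ℕ => M) n - π • Pi.π (fun _ : ℕ => M) (n + 1) := by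
    simp [towerMap]
  exact ConcreteCategory.congr_hom (congrArg (fun f => f.f i) h) x

lemma exists_d_eq_of_isDerivedPiComplete (hM : IsDerivedPiComplete A π M) {i : ℤ}
    (zs : ℕ → M.X i) (ws : ℕ → M.X (i - 1)) (hzs : ∀ n, M.d i (i + 1) (zs n) = 0)
    (hrel : ∀ n, π • zs (n + 1) + M.d (i - 1) i (ws n) = zs n) :
    ∃ y : M.X (i - 1), M.d (i - 1) i y = zs 0 := by
  have hcone : IsZero ((CochainComplex.mappingCone (towerMap A π M)).homology (i - 1)) :=
    (hM i).of_iso ((CochainComplex.ShiftSequence.shiftIso _ (-1) i (i - 1) (by omega)).app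
      (CochainComplex.mappingCone (towerMap A π M))).symm
  set Z := (piXIso (fun _ : ℕ => M) i).inv zs
  set W := (piXIso (fun _ : ℕ => M) (i - 1)).inv ws
  have hZ : (∏ᶜ fun _ : ℕ => M).d i (i + 1) Z = 0 :=
    piX_ext _ fun n => by rw [Hom.comm_apply, π_f_piXIso_inv_apply, hzs, map_zero]
  have hZW : (towerMap A π M).f i Z = (∏ᶜ fun _ : ℕ => M).d (i - 1) i W :=
    piX_ext _ fun n => by
      rw [towerMap_f_apply, Hom.comm_apply, π_f_piXIso_inv_apply, π_f_piXIso_inv_apply,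
        π_f_piXIso_inv_apply, ← hrel n, add_sub_cancel_left]
  obtain ⟨Y, hY⟩ := exists_d_eq_of_isZero_homology_homotopyCofiber (towerMap A π M)
    (h := i - 2) (by simp only [ComplexShape.up_Rel]; omega) (by simp) rfl hcone Z hZ W hZW
  exact ⟨(Pi.π (fun _ : ℕ => M) 0).f (i - 1) Y, by
    rw [← Hom.comm_apply, hY, π_f_piXIso_inv_apply]⟩

end Tower

theorem stmt_7_general (A : Type) [CommRing A] (π : A) (M : CochainComplex (ModuleCat.{0} A) ℤ)
    (hcplt : IsDerivedPiComplete A π M)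
    (h : ∀ i : ℤ, -2 < i → IsZero ((derivedModCone A π M).homology i)) :
    ∀ i : ℤ, -1 < i → IsZero (M.homology i) := by
  intro i hi
  rw [M.isZero_homology_iff_exists_d_eq (i := i - 1) (k := i + 1) (by simp) rfl]
  intro z hz
  obtain ⟨zs, ws, rfl, hzs, hrel⟩ :=
    exists_tower_of_isZero_homology_derivedModCone (h i (by omega)) z hz
  exact exists_d_eq_of_isDerivedPiComplete hcplt zs ws hzs hrel

/-- Let `A` be a commutative ring, `π ∈ A` a non-zero-divisor, and `M ∈ D(A)`
derived `π`-adically complete. If `M ⊗^L_A A/π` is concentrated in cohomological degrees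
`≤ -2`, then `M` is concentrated in cohomological degrees `≤ -1`. -/
theorem stmt_7 (A : Type) [CommRing A] (π : A) (hπ : π ∈ nonZeroDivisors A)
    (M : CochainComplex (ModuleCat.{0} A) ℤ)
    (hcplt : IsDerivedPiComplete A π M)
    (h : ∀ i : ℤ, -2 < i → IsZero ((derivedModCone A π M).homology i)) :
    ∀ i : ℤ, -1 < i → IsZero (M.homology i) :=
  stmt_7_general A π M hcplt h
end

section
/- Let A be a commutative ring and B a finitely presented flat A-algebra. Then there exist sets I and J and an exact sequence of A-modules 0 → A^{(I)} → A^{(J)} → B → 0, i.e., B has a free resolution of length 1 by (possibly infinite rank) free A-modules. -/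
/-!
Present `B` as an `A`-module by countably many generators and relations: `A[X₁, …, Xₙ]` has a
countable basis of monomials, and a finitely generated ideal is a countably generated `A`-module.
Write `π : A^(ℕ) → B` and let `k₀, k₁, …` generate `ker π`. Using the equational criterion for
flatness, build finite free modules `Fₙ` with maps `yₙ : Fₙ → B` and `tₙ : Fₙ → Fₙ₊₁`,
`yₙ₊₁ ∘ tₙ = yₙ`, together with lifts `cₙ : A^mₙ → Fₙ` of `π` on the first `mₙ` generators, such
that `cₙ₊₁` kills `kₙ` and `tₙ` lands in the range of `cₙ₊₁`. Then every element of `B` comes from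
some `Fₙ`, and every element of `ker yₙ` is sent by `tₙ` to the image of a combination of the `kᵢ`,
which dies at a later stage. So `B` is the colimit of the `Fₙ`, and the telescope
`0 → ⊕ Fₙ → ⊕ Fₙ → B → 0`, `x ↦ x - tₙ x` on `Fₙ`, is exact.
-/

open Function LinearMap Submodule Filter
open scoped Pointwise

section Telescope

variable {R : Type*} [CommRing R] {F : ℕ → Type*} [∀ n, AddCommGroup (F n)]
  [∀ n, Module R (F n)] (t : ∀ n, F n →ₗ[R] F (n + 1))

/-- The cokernel of this map is the colimit of the sequence `F 0 → F 1 → ⋯`. -/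
def telescope : (Π₀ n, F n) →ₗ[R] Π₀ n, F n :=
  DFinsupp.lsum ℕ fun n => DFinsupp.lsingle n - DFinsupp.lsingle (n + 1) ∘ₗ t n

theorem telescope_single (n : ℕ) (z : F n) :
    telescope t (DFinsupp.single n z) =
      DFinsupp.single n z - DFinsupp.single (n + 1) (t n z) := by
  simp [telescope]

theorem telescope_apply_zero (w : Π₀ n, F n) : telescope t w 0 = w 0 := by
  induction w using DFinsupp.induction with
  | h0 => simp
  | ha i z w _ _ ih =>
    simp [telescope_single, ih, DFinsupp.single_apply]

theorem telescope_apply_succ (w : Π₀ n, F n) (n : ℕ) :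
    telescope t w (n + 1) = w (n + 1) - t n (w n) := by
  induction w using DFinsupp.induction with
  | h0 => simp
  | ha i z w _ _ ih =>
    simp only [map_add, DFinsupp.add_apply, ih, telescope_single, DFinsupp.sub_apply]
    rcases eq_or_ne i n with rfl | hin
    · simp [DFinsupp.single_eq_of_ne (Nat.succ_ne_self i)]
      abel
    · simp [hin]
      abel

theorem telescope_injective : Injective (telescope t) := by
  refine (injective_iff_map_eq_zero _).2 fun w hw => DFinsupp.ext fun n => ?_
  induction n with
  | zero => simpa [hw] using (telescope_apply_zero t w).symm
  | succ n ih => simpa [hw, ih] using (telescope_apply_succ t w n).symm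

theorem single_sub_single_mem_range_telescope (n : ℕ) (z : F n) :
    DFinsupp.single n z - DFinsupp.single (n + 1) (t n z) ∈ range (telescope t) :=
  ⟨_, telescope_single t n z⟩

variable {B : Type*} [AddCommGroup B] [Module R B] {t} {y : ∀ n, F n →ₗ[R] B}
  (hy : ∀ n, y (n + 1) ∘ₗ t n = y n)
include hy

theorem lsum_comp_telescope : DFinsupp.lsum ℕ y ∘ₗ telescope t = 0 := by
  refine DFinsupp.lhom_ext fun n z => ?_
  simp [telescope_single, ← hy n]

theorem exists_single_sub_single_mem_range_telescope {n M : ℕ} (hnM : n ≤ M) (z : F n) :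
    ∃ w : F M, y M w = y n z ∧
      DFinsupp.single n z - DFinsupp.single M w ∈ range (telescope t) := by
  induction M, hnM using Nat.le_induction with
  | base => exact ⟨z, rfl, by simp⟩
  | succ M _ ih =>
    obtain ⟨w, hyw, hw⟩ := ih
    refine ⟨t M w, by rw [← hyw, ← hy M]; rfl, ?_⟩
    simpa using add_mem hw (single_sub_single_mem_range_telescope t M w)

theorem exists_sub_single_mem_range_telescope (w : Π₀ n, F n) :
    ∃ N, ∃ z : F N, y N z = DFinsupp.lsum ℕ y w ∧
      w - DFinsupp.single N z ∈ range (telescope t) := by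
  induction w using DFinsupp.induction with
  | h0 => exact ⟨0, 0, by simp, by simp⟩
  | ha i z w _ _ ih =>
    obtain ⟨N, z', hyz', hz'⟩ := ih
    obtain ⟨u, hyu, hu⟩ := exists_single_sub_single_mem_range_telescope hy (le_max_left _ _) z
    obtain ⟨u', hyu', hu'⟩ :=
      exists_single_sub_single_mem_range_telescope hy (le_max_right _ _) z'
    refine ⟨max i N, u + u', by simp [hyu, hyu', hyz'], ?_⟩
    convert add_mem (add_mem hu hz') hu' using 1
    rw [DFinsupp.single_add]
    abel

theorem ker_lsum_eq_range_telescope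
    (hker : ∀ n (z : F n), y n z = 0 → DFinsupp.single n z ∈ range (telescope t)) :
    ker (DFinsupp.lsum ℕ y) = range (telescope t) := by
  refine le_antisymm (fun w hw => ?_) (range_le_ker_iff.2 (lsum_comp_telescope hy))
  obtain ⟨N, z, hyz, hz⟩ := exists_sub_single_mem_range_telescope hy w
  simpa using add_mem hz (hker N z (hyz.trans hw))

end Telescope

def Module.HasLengthOneFreeResolution (R M : Type*) [CommRing R] [AddCommGroup M]
    [Module R M] : Prop :=
  ∃ (I J : Type) (f : (I →₀ R) →ₗ[R] (J →₀ R)) (g : (J →₀ R) →ₗ[R] M),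
    Function.Injective f ∧ Function.Surjective g ∧ ker g = range f

theorem Module.hasLengthOneFreeResolution_of_telescope {R B : Type*} [CommRing R]
    [AddCommGroup B] [Module R B] {ι : ℕ → Type}
    {t : ∀ n, (ι n →₀ R) →ₗ[R] (ι (n + 1) →₀ R)}
    {y : ∀ n, (ι n →₀ R) →ₗ[R] B} (hy : ∀ n, y (n + 1) ∘ₗ t n = y n)
    (hsurj : ∀ b, ∃ n, ∃ z, y n z = b)
    (hker : ∀ n z, y n z = 0 → DFinsupp.single n z ∈ range (telescope t)) :
    HasLengthOneFreeResolution R B := by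
  let E : ((Σ n, ι n) →₀ R) ≃ₗ[R] Π₀ n, (ι n →₀ R) := sigmaFinsuppLequivDFinsupp R
  refine ⟨Σ n, ι n, Σ n, ι n, E.symm.toLinearMap ∘ₗ telescope t ∘ₗ E.toLinearMap,
    DFinsupp.lsum ℕ y ∘ₗ E.toLinearMap, ?_, ?_, ?_⟩
  · exact E.symm.injective.comp ((telescope_injective t).comp E.injective)
  · intro b
    obtain ⟨n, z, rfl⟩ := hsurj b
    exact ⟨E.symm (DFinsupp.single n z), by simp⟩
  · rw [ker_comp, ker_lsum_eq_range_telescope hy hker, range_comp, range_comp,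
      LinearEquiv.range, Submodule.map_top, map_equiv_eq_comap_symm, LinearEquiv.symm_symm]

def Module.IsCountablyPresented (R M : Type*) [CommRing R] [AddCommGroup M] [Module R M] :
    Prop :=
  ∃ (π : (ℕ →₀ R) →ₗ[R] M) (k : ℕ → ℕ →₀ R), Surjective π ∧ span R (Set.range k) = ker π

theorem Module.IsCountablyPresented.of_basis {R M P ι : Type*} [CommRing R] [AddCommGroup M]
    [Module R M] [AddCommGroup P] [Module R P] [Countable ι] (b : Module.Basis ι R P)
    {π₀ : P →ₗ[R] M} (hπ₀ : Surjective π₀) {S : Set P} (hS : S.Countable)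
    (hker : span R S = ker π₀) :
    IsCountablyPresented R M := by
  -- `ι ⊕ ℕ` is infinite, hence in bijection with `ℕ`; the extra generators are sent to `0`.
  obtain ⟨_⟩ := nonempty_denumerable (ι ⊕ ℕ)
  let e : (ℕ →₀ R) ≃ₗ[R] P × (ℕ →₀ R) :=
    (Finsupp.domLCongr (Denumerable.eqv (ι ⊕ ℕ)).symm).trans
      ((Finsupp.sumFinsuppLEquivProdFinsupp R).trans
        (b.repr.symm.prodCongr (LinearEquiv.refl R _)))
  let T : Set (P × (ℕ →₀ R)) := inl R P _ '' S ∪ inr R P _ '' Set.range Finsupp.basisSingleOne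
  have hT : span R T = ker (π₀ ∘ₗ fst R P (ℕ →₀ R)) := by
    rw [span_inl_union_inr, hker, Finsupp.basisSingleOne.span_eq, ker_comp, comap_fst]
  have hTc : T.Countable := (hS.image _).union ((Set.countable_range _).image _)
  have hTn : T.Nonempty := ((Set.range_nonempty _).image _).inr
  obtain ⟨k, hk⟩ := (hTc.image e.symm).exists_eq_range (hTn.image _)
  refine ⟨π₀ ∘ₗ fst R P _ ∘ₗ e.toLinearMap, k,
    (hπ₀.comp Prod.fst_surjective).comp e.surjective, ?_⟩
  rw [← hk, ← LinearMap.comp_assoc, ker_comp, ← hT, comap_equiv_eq_map_symm, Submodule.map_span]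
  rfl

theorem Algebra.FinitePresentation.isCountablyPresented {A B : Type*} [CommRing A]
    [CommRing B] [Algebra A B] (hB : Algebra.FinitePresentation A B) :
    Module.IsCountablyPresented A B := by
  obtain ⟨n, f, hf, G, hG⟩ := hB.out
  let b := MvPolynomial.basisMonomials (Fin n) A
  refine .of_basis b (π₀ := f.toLinearMap) hf
    (S := Set.range b • (G : Set (MvPolynomial (Fin n) A))) ?_ ?_
  · rw [← Set.image2_smul]
    exact (Set.countable_range _).image2 G.countable_toSet _
  · ext x
    rw [span_smul_of_span_eq_top b.span_eq, restrictScalars_mem, ← Ideal.span, hG]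
    simp [RingHom.mem_ker]

theorem Module.projective_lifting_property_of_range_le {R P M N : Type*} [CommRing R]
    [AddCommGroup P] [Module R P] [Module.Projective R P] [AddCommGroup M] [Module R M]
    [AddCommGroup N] [Module R N] {f : M →ₗ[R] N} {h : P →ₗ[R] N} (hle : range h ≤ range f) :
    ∃ h' : P →ₗ[R] M, f ∘ₗ h' = h := by
  obtain ⟨h', hh'⟩ := Module.projective_lifting_property f.rangeRestrict
    (h.codRestrict _ fun x => hle ⟨x, rfl⟩) f.surjective_rangeRestrict
  exact ⟨h', LinearMap.ext fun x => congr_arg Subtype.val (LinearMap.congr_fun hh' x)⟩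

theorem exists_mem_span_image_Iio {R M : Type*} [CommRing R] [AddCommGroup M] [Module R M]
    {k : ℕ → M} {x : M} (hx : x ∈ span R (Set.range k)) : ∃ L, x ∈ span R (k '' Set.Iio L) := by
  have hU : Set.range k = ⋃ L, k '' Set.Iio L := by
    ext x
    simpa using ⟨fun ⟨i, hi⟩ => ⟨i + 1, i, Nat.lt_succ_self i, hi⟩, fun ⟨_, i, _, hi⟩ => ⟨i, hi⟩⟩
  rwa [hU, span_iUnion, mem_iSup_of_directed _ (Monotone.directed_le fun _ _ h =>
    span_mono (Set.image_mono (Set.Iio_subset_Iio h)))] at hx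

namespace RaynaudGruson

noncomputable section

variable (R : Type*) [CommRing R]

def finIncl (m : ℕ) : (Fin m →₀ R) →ₗ[R] (ℕ →₀ R) := Finsupp.lmapDomain R R Fin.val

def finCastLE {m m' : ℕ} (h : m ≤ m') : (Fin m →₀ R) →ₗ[R] (Fin m' →₀ R) :=
  Finsupp.lmapDomain R R (Fin.castLE h)

theorem finIncl_injective (m : ℕ) : Injective (finIncl R m) :=
  Finsupp.mapDomain_injective Fin.val_injective

theorem finIncl_finCastLE {m m' : ℕ} (h : m ≤ m') (p : Fin m →₀ R) :
    finIncl R m' (finCastLE R h p) = finIncl R m p := by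
  simp only [finIncl, finCastLE, Finsupp.lmapDomain_apply, ← Finsupp.mapDomain_comp]
  rfl

theorem finCastLE_finCastLE {m m' m'' : ℕ} (h : m ≤ m') (h' : m' ≤ m'') (p : Fin m →₀ R) :
    finCastLE R h' (finCastLE R h p) = finCastLE R (h.trans h') p := by
  simp only [finCastLE, Finsupp.lmapDomain_apply, ← Finsupp.mapDomain_comp]
  rfl

theorem finCastLE_refl (m : ℕ) : finCastLE R (le_refl m) = LinearMap.id := by
  simp only [finCastLE, Fin.castLE_rfl]
  exact Finsupp.lmapDomain_id R R

theorem range_finIncl (m : ℕ) : range (finIncl R m) = Finsupp.supported R R (Set.Iio m) := by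
  rw [finIncl, Finsupp.range_lmapDomain, Finsupp.supported_eq_span_single, ← Fin.range_val,
    ← Set.range_comp]
  rfl

theorem eventually_mem_range_finIncl (q : ℕ →₀ R) :
    ∀ᶠ m in atTop, q ∈ range (finIncl R m) := by
  refine eventually_atTop.2 ⟨q.support.sup id + 1, fun m hm => ?_⟩
  rw [range_finIncl, Finsupp.mem_supported]
  exact fun i hi => (Finset.le_sup (f := _root_.id) hi).trans_lt hm

theorem eventually_le_range_finIncl {N : Submodule R (ℕ →₀ R)} (hN : N.FG) :
    ∀ᶠ m in atTop, N ≤ range (finIncl R m) := by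
  obtain ⟨s, rfl⟩ := hN
  filter_upwards [(eventually_all_finset s).2 fun q _ => eventually_mem_range_finIncl R q]
    with m hm
  exact span_le.2 hm

variable (B : Type*) [AddCommGroup B] [Module R B]

/-- A finite free module `R^r` mapping to `B` by `y`, with a map `c : R^m → R^r` meant to lift
`π` on the first `m` generators (see `Stage.IsApprox`). -/
structure Stage where
  m : ℕ
  r : ℕ
  y : (Fin r →₀ R) →ₗ[R] B
  c : (Fin m →₀ R) →ₗ[R] (Fin r →₀ R)

variable {R B} (π : (ℕ →₀ R) →ₗ[R] B) (k : ℕ → ℕ →₀ R)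

structure Stage.IsApprox (n : ℕ) (s : Stage R B) : Prop where
  le_m : n ≤ s.m
  y_comp_c : s.y ∘ₗ s.c = π ∘ₗ finIncl R s.m
  kills : ∀ i < n, k i ∈ (ker s.c).map (finIncl R s.m)

structure Stage.Transition (s s' : Stage R B) where
  le : s.m ≤ s'.m
  t : (Fin s.r →₀ R) →ₗ[R] (Fin s'.r →₀ R)
  y_comp_t : s'.y ∘ₗ t = s.y
  t_comp_c : t ∘ₗ s.c = s'.c ∘ₗ finCastLE R le
  range_t_le : range t ≤ range s'.c

theorem Stage.isApprox_zero : (⟨0, 0, 0, 0⟩ : Stage R B).IsApprox π k 0 where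
  le_m := le_rfl
  y_comp_c := LinearMap.ext fun p => by simp [Subsingleton.elim p 0]
  kills _ h := absurd h (Nat.not_lt_zero _)

variable {π k}

theorem Stage.IsApprox.c_eq_zero_of_mem_span {n : ℕ} {s : Stage R B} (hs : s.IsApprox π k n)
    {p : Fin s.m →₀ R} (hp : finIncl R s.m p ∈ span R (k '' Set.Iio n)) : s.c p = 0 := by
  have hle : span R (k '' Set.Iio n) ≤ (ker s.c).map (finIncl R s.m) :=
    span_le.2 fun _ ⟨i, hi, hx⟩ => hx ▸ hs.kills i hi
  rw [← LinearMap.mem_ker, ← comap_map_eq_of_injective (finIncl_injective R s.m) (ker s.c)]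
  exact hle hp

theorem Stage.IsApprox.exists_transition_of_lift [Module.Flat R B] {n : ℕ} {s : Stage R B}
    (hs : s.IsApprox π k n) (hkn : π (k n) = 0) {m' : ℕ} (hm : s.m ≤ m') (hn : n + 1 ≤ m')
    {κ : Fin m' →₀ R} (hκ : finIncl R m' κ = k n)
    {lift : (Fin s.r →₀ R) →ₗ[R] (Fin m' →₀ R)} (hlift : π ∘ₗ finIncl R m' ∘ₗ lift = s.y) :
    ∃ s' : Stage R B, s'.IsApprox π k (n + 1) ∧ Nonempty (s.Transition s') := by
  let x : (Fin m' →₀ R) × (Fin s.r →₀ R) →ₗ[R] B := coprod (π ∘ₗ finIncl R m') s.y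
  -- Once `a` kills these relations, `c' := a ∘ inl` extends `t ∘ c` for `t := a ∘ inr`, the
  -- range of `t` lies in that of `c'`, and `c'` kills `k n`.
  let rel : ((Fin s.m →₀ R) × (Fin s.r →₀ R)) × R →ₗ[R] (Fin m' →₀ R) × (Fin s.r →₀ R) :=
    coprod (coprod (inl R _ _ ∘ₗ finCastLE R hm - inr R _ _ ∘ₗ s.c)
      (inl R _ _ ∘ₗ lift - inr R _ _)) (toSpanSingleton R _ (κ, 0))
  have hrel : x ∘ₗ rel = 0 := by
    refine LinearMap.ext fun ⟨⟨p, v⟩, c⟩ => ?_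
    have hc := LinearMap.congr_fun hs.y_comp_c p
    have hl := LinearMap.congr_fun hlift v
    simp only [LinearMap.comp_apply] at hc hl
    simp [x, rel, finIncl_finCastLE, hc, hl, hκ, hkn]
    abel
  obtain ⟨r', a, y', hxa, harel⟩ :=
    Module.Flat.exists_factorization_of_comp_eq_zero_of_free hrel
  have ha (w) : a (rel w) = 0 := LinearMap.congr_fun harel w
  have h1 (p) : a (finCastLE R hm p, 0) = a (0, s.c p) := by
    rw [← sub_eq_zero, ← map_sub, Prod.mk_sub_mk, sub_zero, zero_sub]
    simpa [rel, sub_eq_add_neg] using ha ((p, 0), 0)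
  have h2 (v) : a (lift v, 0) = a (0, v) := by
    rw [← sub_eq_zero, ← map_sub, Prod.mk_sub_mk, sub_zero, zero_sub]
    simpa [rel, sub_eq_add_neg] using ha ((0, v), 0)
  have h3 : a (κ, 0) = 0 := by simpa [rel] using ha ((0, 0), 1)
  refine ⟨⟨m', r', y', a ∘ₗ inl R _ _⟩, ⟨hn, ?_, ?_⟩, ⟨⟨hm, a ∘ₗ inr R _ _, ?_, ?_, ?_⟩⟩⟩
  · rw [← LinearMap.comp_assoc, ← hxa, coprod_inl]
  · intro i hi
    rcases (Nat.lt_succ_iff_lt_or_eq.1 hi) with hi | rfl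
    · obtain ⟨p, hp, hpk⟩ := hs.kills i hi
      refine ⟨finCastLE R hm p, ?_, by rw [finIncl_finCastLE, hpk]⟩
      simp only [SetLike.mem_coe, LinearMap.mem_ker] at hp ⊢
      simp [h1, hp, ← Prod.zero_eq_mk]
    · exact ⟨κ, h3, hκ⟩
  · rw [← LinearMap.comp_assoc, ← hxa, coprod_inr]
  · exact LinearMap.ext fun p => (h1 p).symm
  · rintro _ ⟨v, rfl⟩
    exact ⟨lift v, h2 v⟩

theorem Stage.IsApprox.exists_transition [Module.Flat R B] (hπ : Surjective π) {n : ℕ}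
    {s : Stage R B} (hs : s.IsApprox π k n) (hkn : π (k n) = 0) :
    ∃ s' : Stage R B, s'.IsApprox π k (n + 1) ∧ Nonempty (s.Transition s') := by
  obtain ⟨h, hh⟩ := Module.projective_lifting_property π s.y hπ
  have hfg : (range h ⊔ span R {k n}).FG := (fg_range h).sup (fg_span_singleton (k n))
  obtain ⟨m', hle, hm'⟩ := (eventually_le_range_finIncl R hfg |>.and
    (eventually_ge_atTop (max s.m (n + 1)))).exists
  obtain ⟨κ, hκ⟩ := hle (mem_sup_right (mem_span_singleton_self (k n)))
  obtain ⟨lift, hlift⟩ := Module.projective_lifting_property_of_range_le (le_sup_left.trans hle)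
  exact hs.exists_transition_of_lift hkn (le_of_max_le_left hm') (le_of_max_le_right hm') hκ
    (by rw [hlift, hh])

theorem exists_chain [Module.Flat R B] (hπ : Surjective π) (hk : ∀ i, π (k i) = 0) :
    ∃ (s : ℕ → Stage R B) (_ : ∀ n, (s n).Transition (s (n + 1))),
      ∀ n, (s n).IsApprox π k n := by
  have step (n) (s : {s : Stage R B // s.IsApprox π k n}) :
      ∃ s' : {s' : Stage R B // s'.IsApprox π k (n + 1)}, Nonempty (s.1.Transition s'.1) := by
    obtain ⟨s', hs', htr⟩ := s.2.exists_transition hπ (hk n)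
    exact ⟨⟨s', hs'⟩, htr⟩
  choose next htr using step
  let seq (n : ℕ) : {s : Stage R B // s.IsApprox π k n} :=
    Nat.rec ⟨_, Stage.isApprox_zero π k⟩ next n
  exact ⟨fun n => (seq n).1, fun n => (htr n (seq n)).some, fun n => (seq n).2⟩

theorem exists_stage_y_eq {s : ℕ → Stage R B} (hs : ∀ n, (s n).IsApprox π k n)
    (hπ : Surjective π) (b : B) : ∃ n, ∃ z, (s n).y z = b := by
  obtain ⟨u, rfl⟩ := hπ b
  obtain ⟨N, hN⟩ := eventually_atTop.1 (eventually_mem_range_finIncl R u)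
  obtain ⟨p, rfl⟩ := hN _ (hs N).le_m
  exact ⟨N, (s N).c p, by rw [← LinearMap.comp_apply, (hs N).y_comp_c, LinearMap.comp_apply]⟩

theorem monotone_stage_m {s : ℕ → Stage R B} (tr : ∀ n, (s n).Transition (s (n + 1))) :
    Monotone fun n => (s n).m :=
  monotone_nat_of_le_succ fun n => (tr n).le

section Chain

variable {s : ℕ → Stage R B} (tr : ∀ n, (s n).Transition (s (n + 1)))

theorem single_c_sub_single_c_mem_range_telescope {n M : ℕ} (hnM : n ≤ M)
    (p : Fin (s n).m →₀ R) :
    DFinsupp.single n ((s n).c p) -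
        DFinsupp.single M ((s M).c (finCastLE R (monotone_stage_m tr hnM) p))
      ∈ range (telescope fun n => (tr n).t) := by
  induction M, hnM using Nat.le_induction with
  | base => simp [finCastLE_refl]
  | succ M hM ih =>
    have htc := LinearMap.congr_fun (tr M).t_comp_c (finCastLE R (monotone_stage_m tr hM) p)
    simp only [LinearMap.comp_apply, finCastLE_finCastLE] at htc
    have := add_mem ih (single_sub_single_mem_range_telescope _ M
      ((s M).c (finCastLE R (monotone_stage_m tr hM) p)))
    rwa [htc, sub_add_sub_cancel] at this

theorem single_mem_range_telescope_of_y_eq_zero (hs : ∀ n, (s n).IsApprox π k n)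
    (hker : span R (Set.range k) = ker π) {N : ℕ} {z : Fin (s N).r →₀ R}
    (hz : (s N).y z = 0) :
    DFinsupp.single N z ∈ range (telescope fun n => (tr n).t) := by
  obtain ⟨p, hp⟩ := (tr N).range_t_le ⟨z, rfl⟩
  have hpker : finIncl R _ p ∈ span R (Set.range k) := by
    rw [hker, LinearMap.mem_ker, ← LinearMap.comp_apply, ← (hs (N + 1)).y_comp_c,
      LinearMap.comp_apply, hp, ← LinearMap.comp_apply, (tr N).y_comp_t, hz]
  obtain ⟨L, hL⟩ := exists_mem_span_image_Iio hpker
  have hL' : N + 1 ≤ max L (N + 1) := le_max_right _ _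
  have hc : (s _).c (finCastLE R (monotone_stage_m tr hL') p) = 0 := by
    refine (hs _).c_eq_zero_of_mem_span ?_
    rw [finIncl_finCastLE]
    exact span_mono (Set.image_mono (Set.Iio_subset_Iio (le_max_left _ _))) hL
  have := add_mem (single_sub_single_mem_range_telescope _ N z)
    (single_c_sub_single_c_mem_range_telescope tr hL' p)
  rwa [hc, hp, sub_add_sub_cancel, DFinsupp.single_zero, sub_zero] at this

end Chain

end

end RaynaudGruson

theorem Module.Flat.hasLengthOneFreeResolution_of_isCountablyPresented {R B : Type*}
    [CommRing R] [AddCommGroup B] [Module R B] [Module.Flat R B]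
    (hB : Module.IsCountablyPresented R B) : Module.HasLengthOneFreeResolution R B := by
  obtain ⟨π, k, hπ, hker⟩ := hB
  obtain ⟨s, tr, hs⟩ := RaynaudGruson.exists_chain hπ fun i => hker.le (subset_span ⟨i, rfl⟩)
  exact Module.hasLengthOneFreeResolution_of_telescope (fun n => (tr n).y_comp_t)
    (RaynaudGruson.exists_stage_y_eq hs hπ) fun _ _ =>
      RaynaudGruson.single_mem_range_telescope_of_y_eq_zero tr hs hker

/-- Raynaud–Gruson: Let `A` be a commutative ring and `B` a finitely presented
flat `A`-algebra. Then there are sets `I`, `J` and an exact sequence of `A`-modules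
`0 → A^{(I)} → A^{(J)} → B → 0`, i.e. `B` has a free resolution of length 1. -/
theorem stmt_12 (A B : Type) [CommRing A] [CommRing B] [Algebra A B]
    [Module.Flat A B] (hB : Algebra.FinitePresentation A B) :
    ∃ (I J : Type) (f : (I →₀ A) →ₗ[A] (J →₀ A)) (g : (J →₀ A) →ₗ[A] B),
      Function.Injective f ∧ Function.Surjective g ∧ LinearMap.ker g = LinearMap.range f :=
  Module.Flat.hasLengthOneFreeResolution_of_isCountablyPresented hB.isCountablyPresented
end
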